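/- Let ρ, ρ̃ ∈ [ρ_min, ρ_max] and θ, θ̃ ∈ [θ_min, θ_max] with 0 < ρ_min, 0 < θ_min, and define H_θ̃(ρ,θ) = ρ(c_v θ − θ̃ s(ρ,θ)) with s(ρ,θ) = c_v log θ − log ρ, c_v > 0. Define the relative entropy-energy E(ρ,θ | ρ̃,θ̃) = H_θ̃(ρ,θ) − ∂_ρH_θ̃(ρ̃,θ̃)(ρ − ρ̃) − H_θ̃(ρ̃,θ̃). Then there exist constants 0 < c₁ ≤ c₂ depending only on ρ_min, ρ_max, θ_min, θ_max, c_v such that c₁(|ρ−ρ̃|² + |θ−θ̃|²) ≤ E(ρ,θ | ρ̃,θ̃) ≤ c₂(|ρ−ρ̃|² + |θ−θ̃|²). -/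

import Mathlib

open Real intervalIntegral


lemma aux_hasDerivAt_logint (a : ℝ) {s : ℝ} (hs : 0 < s) :
    HasDerivAt (fun t => t * Real.log t - t - t * Real.log a) (Real.log s - Real.log a) s := by
  have h1 : HasDerivAt (fun t : ℝ => t * Real.log t) (Real.log s + 1) s := by
    have := (hasDerivAt_id s).mul (Real.hasDerivAt_log hs.ne')
    refine this.congr_deriv ?_
    simp [hs.ne']
  have h2 := (h1.sub (hasDerivAt_id s)).sub ((hasDerivAt_id s).mul_const (Real.log a))
  refine h2.congr_deriv ?_
  simp

lemma aux_hasDerivAt_logint' (b : ℝ) {s : ℝ} (hs : 0 < s) :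
    HasDerivAt (fun t => t * Real.log b - (t * Real.log t - t)) (Real.log b - Real.log s) s := by
  have h1 : HasDerivAt (fun t : ℝ => t * Real.log t) (Real.log s + 1) s := by
    have := (hasDerivAt_id s).mul (Real.hasDerivAt_log hs.ne')
    refine this.congr_deriv ?_
    simp [hs.ne']
  have h2 := ((hasDerivAt_id s).mul_const (Real.log b)).sub (h1.sub (hasDerivAt_id s))
  refine h2.congr_deriv ?_
  simp

lemma aux_hasDerivAt_quad (a M : ℝ) (s : ℝ) :
    HasDerivAt (fun t => (t - a)^2 / (2 * M)) ((s - a) / M) s := by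
  have h := (((hasDerivAt_id s).sub_const a).pow 2).div_const (2 * M)
  refine h.congr_deriv ?_
  rcases eq_or_ne M 0 with h0 | h0
  · simp [h0]
  · field_simp; simp only [id, Pi.sub_apply]; ring

lemma aux_hasDerivAt_quad' (b M : ℝ) (s : ℝ) :
    HasDerivAt (fun t => -((b - t)^2 / (2 * M))) ((b - s) / M) s := by
  have h := ((((hasDerivAt_const s b).sub (hasDerivAt_id s)).pow 2).div_const (2 * M)).neg
  refine h.congr_deriv ?_
  rcases eq_or_ne M 0 with h0 | h0
  · simp [h0]
  · field_simp; simp only [id, Pi.sub_apply]; ring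

lemma aux_log_lb {m M y s : ℝ} (hm : 0 < m) (hmy : m ≤ y) (hys : y ≤ s) (hsM : s ≤ M) :
    (s - y) / M ≤ Real.log s - Real.log y ∧ Real.log s - Real.log y ≤ (s - y) / m := by
  have hy : 0 < y := hm.trans_le hmy
  have hs : 0 < s := hy.trans_le hys
  constructor
  · have h1 : Real.log (y / s) ≤ y / s - 1 := Real.log_le_sub_one_of_pos (by positivity)
    rw [Real.log_div hy.ne' hs.ne'] at h1
    have h2 : 1 - y / s = (s - y) / s := by field_simp
    have h3 : (s - y) / M ≤ (s - y) / s :=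
      div_le_div_of_nonneg_left (by linarith) hs hsM
    linarith
  · have h1 : Real.log (s / y) ≤ s / y - 1 := Real.log_le_sub_one_of_pos (by positivity)
    rw [Real.log_div hs.ne' hy.ne'] at h1
    have h2 : s / y - 1 = (s - y) / y := by field_simp
    have h3 : (s - y) / y ≤ (s - y) / m :=
      div_le_div_of_nonneg_left (by linarith) hm hmy
    linarith

/-- Two-sided quadratic bound for D(x,y) = x log x - x log y - x + y on [m,M]. -/
lemma aux_D_bounds {m M x y : ℝ} (hm : 0 < m) (hx : x ∈ Set.Icc m M) (hy : y ∈ Set.Icc m M) :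
    (x - y)^2 / (2 * M) ≤ x * Real.log x - x * Real.log y - x + y ∧
    x * Real.log x - x * Real.log y - x + y ≤ (x - y)^2 / (2 * m) := by
  obtain ⟨hmx, hxM⟩ := hx
  obtain ⟨hmy, hyM⟩ := hy
  have hxpos : 0 < x := hm.trans_le hmx
  have hypos : 0 < y := hm.trans_le hmy
  rcases le_total y x with hyx | hxy
  · -- D(x,y) = ∫_y^x (log s - log y) ds
    have huIcc : Set.uIcc y x = Set.Icc y x := Set.uIcc_of_le hyx
    have hsub : Set.Icc y x ⊆ Set.Icc m M := Set.Icc_subset_Icc hmy hxM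
    have hint1 : IntervalIntegrable (fun s => Real.log s - Real.log y) MeasureTheory.volume y x := by
      apply ContinuousOn.intervalIntegrable
      rw [huIcc]
      exact (Real.continuousOn_log.mono (fun s hs => by
        have := hsub hs; exact ne_of_gt (hm.trans_le this.1))).sub continuousOn_const
    have hint2 : ∀ C : ℝ, IntervalIntegrable (fun s => (s - y) / C) MeasureTheory.volume y x :=
      fun C => (Continuous.intervalIntegrable (by continuity) _ _)
    have hftc : ∫ s in y..x, (Real.log s - Real.log y) =
        x * Real.log x - x * Real.log y - x + y := by
      rw [intervalIntegral.integral_eq_sub_of_hasDerivAt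
        (f := fun t => t * Real.log t - t - t * Real.log y)
        (fun s hs => aux_hasDerivAt_logint y (by
          rw [huIcc] at hs; exact hm.trans_le (hsub hs).1)) hint1]
      ring
    have hq : ∀ C : ℝ, ∫ s in y..x, (s - y) / C = (x - y)^2 / (2 * C) := by
      intro C
      rw [intervalIntegral.integral_eq_sub_of_hasDerivAt
        (f := fun t => (t - y)^2 / (2 * C))
        (fun s _ => aux_hasDerivAt_quad y C s) (hint2 C)]
      ring
    constructor
    · rw [← hftc, ← hq M]
      apply intervalIntegral.integral_mono_on hyx (hint2 M) hint1
      intro s hs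
      exact (aux_log_lb hm hmy hs.1 ((hsub hs).2)).1
    · rw [← hftc, ← hq m]
      apply intervalIntegral.integral_mono_on hyx hint1 (hint2 m)
      intro s hs
      exact (aux_log_lb hm hmy hs.1 ((hsub hs).2)).2
  · -- D(x,y) = ∫_x^y (log y - log s) ds
    have huIcc : Set.uIcc x y = Set.Icc x y := Set.uIcc_of_le hxy
    have hsub : Set.Icc x y ⊆ Set.Icc m M := Set.Icc_subset_Icc hmx hyM
    have hint1 : IntervalIntegrable (fun s => Real.log y - Real.log s) MeasureTheory.volume x y := by
      apply ContinuousOn.intervalIntegrable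
      rw [huIcc]
      exact continuousOn_const.sub (Real.continuousOn_log.mono (fun s hs => by
        have := hsub hs; exact ne_of_gt (hm.trans_le this.1)))
    have hint2 : ∀ C : ℝ, IntervalIntegrable (fun s => (y - s) / C) MeasureTheory.volume x y :=
      fun C => (Continuous.intervalIntegrable (by continuity) _ _)
    have hftc : ∫ s in x..y, (Real.log y - Real.log s) =
        x * Real.log x - x * Real.log y - x + y := by
      rw [intervalIntegral.integral_eq_sub_of_hasDerivAt
        (f := fun t => t * Real.log y - (t * Real.log t - t))
        (fun s hs => aux_hasDerivAt_logint' y (by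
          rw [huIcc] at hs; exact hm.trans_le (hsub hs).1)) hint1]
      ring
    have hq : ∀ C : ℝ, ∫ s in x..y, (y - s) / C = (x - y)^2 / (2 * C) := by
      intro C
      rw [intervalIntegral.integral_eq_sub_of_hasDerivAt
        (f := fun t => -((y - t)^2 / (2 * C)))
        (fun s _ => aux_hasDerivAt_quad' y C s) (hint2 C)]
      ring
    constructor
    · rw [← hftc, ← hq M]
      apply intervalIntegral.integral_mono_on hxy (hint2 M) hint1
      intro s hs
      have h := aux_log_lb hm (hmx.trans hs.1) hs.2 hyM
      linarith [h.1]
    · rw [← hftc, ← hq m]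
      apply intervalIntegral.integral_mono_on hxy hint1 (hint2 m)
      intro s hs
      have h := aux_log_lb hm (hmx.trans hs.1) hs.2 hyM
      linarith [h.2]


lemma aux_deriv_H (cv θStar ρStar : ℝ) (hρ : 0 < ρStar) :
    deriv (fun r => r * (cv * θStar - θStar * (cv * Real.log θStar - Real.log r))) ρStar =
      cv * θStar - θStar * (cv * Real.log θStar - Real.log ρStar) + θStar := by
  apply HasDerivAt.deriv
  have h1 : HasDerivAt (fun r : ℝ => cv * θStar - θStar * (cv * Real.log θStar - Real.log r))
      (θStar / ρStar) ρStar := by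
    have h := (((Real.hasDerivAt_log hρ.ne').const_sub (cv * Real.log θStar)).const_mul
      θStar).const_sub (cv * θStar)
    refine h.congr_deriv ?_
    field_simp
  have h2 := (hasDerivAt_id ρStar).mul h1
  refine h2.congr_deriv ?_
  field_simp; simp only [id]; ring

/-- Two-sided quadratic bound for the relative (ballistic) energy
E(ρ,θ|ρStar,θStar) = H_θStar(ρ,θ) − ∂_ρH_θStar(ρStar,θStar)(ρ−ρStar) − H_θStar(ρStar,θStar) with
H_Θ(ρ,θ) = ρ(c_v θ − Θ(c_v log θ − log ρ)) on a compact rectangle of the positive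
quadrant. -/
theorem relative_energy_quadratic_equivalence (cv ρmin ρmax θmin θmax : ℝ)
    (hcv : 0 < cv) (hρmin : 0 < ρmin) (hρ : ρmin ≤ ρmax)
    (hθmin : 0 < θmin) (hθ : θmin ≤ θmax) :
    ∃ c₁ c₂ : ℝ, 0 < c₁ ∧ c₁ ≤ c₂ ∧
      ∀ ρ ρStar θ θStar : ℝ, ρ ∈ Set.Icc ρmin ρmax → ρStar ∈ Set.Icc ρmin ρmax →
        θ ∈ Set.Icc θmin θmax → θStar ∈ Set.Icc θmin θmax →
        (fun H : ℝ → ℝ → ℝ → ℝ =>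
          (fun E : ℝ =>
            c₁ * ((ρ - ρStar)^2 + (θ - θStar)^2) ≤ E ∧ E ≤ c₂ * ((ρ - ρStar)^2 + (θ - θStar)^2))
          (H θStar ρ θ - (deriv (fun r => H θStar r θStar) ρStar) * (ρ - ρStar) - H θStar ρStar θStar))
        (fun Θ r t => r * (cv * t - Θ * (cv * Real.log t - Real.log r))) := by
  have hθmax : 0 < θmax := hθmin.trans_le hθ
  have hρmax : 0 < ρmax := hρmin.trans_le hρ
  refine ⟨min (ρmin * cv / (2 * θmax)) (θmin / (2 * ρmax)),
          max (ρmax * cv / (2 * θmin)) (θmax / (2 * ρmin)), by positivity, ?_, ?_⟩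
  · calc min (ρmin * cv / (2 * θmax)) (θmin / (2 * ρmax)) ≤ ρmin * cv / (2 * θmax) :=
        min_le_left _ _
      _ ≤ ρmax * cv / (2 * θmin) := by gcongr
      _ ≤ max (ρmax * cv / (2 * θmin)) (θmax / (2 * ρmin)) := le_max_left _ _
  · intro ρ ρStar θ θStar hρm hρSm hθm hθSm
    dsimp only
    rw [aux_deriv_H cv θStar ρStar (hρmin.trans_le hρSm.1)]
    have hBθ := aux_D_bounds hθmin hθSm hθm
    have hBρ := aux_D_bounds hρmin hρm hρSm
    have hsq : (θStar - θ)^2 = (θ - θStar)^2 := by ring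
    rw [hsq] at hBθ
    set Dθ := θStar * Real.log θStar - θStar * Real.log θ - θStar + θ with hDθdef
    set Dρ := ρ * Real.log ρ - ρ * Real.log ρStar - ρ + ρStar with hDρdef
    have hE : ρ * (cv * θ - θStar * (cv * Real.log θ - Real.log ρ)) -
        (cv * θStar - θStar * (cv * Real.log θStar - Real.log ρStar) + θStar) * (ρ - ρStar) -
        ρStar * (cv * θStar - θStar * (cv * Real.log θStar - Real.log ρStar)) =
        ρ * cv * Dθ + θStar * Dρ := by rw [hDθdef, hDρdef]; ring
    rw [hE]
    have hDθ0 : 0 ≤ Dθ := le_trans (by positivity) hBθ.1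
    have hDρ0 : 0 ≤ Dρ := le_trans (by positivity) hBρ.1
    constructor
    · have l1 : ρmin * cv * ((θ - θStar)^2 / (2 * θmax)) ≤ ρ * cv * Dθ :=
        mul_le_mul (mul_le_mul_of_nonneg_right hρm.1 hcv.le) hBθ.1 (by positivity)
          (by nlinarith [hρm.1])
      have l2 : θmin * ((ρ - ρStar)^2 / (2 * ρmax)) ≤ θStar * Dρ :=
        mul_le_mul hθSm.1 hBρ.1 (by positivity) (by linarith [hθSm.1])
      have hA := min_le_left (ρmin * cv / (2 * θmax)) (θmin / (2 * ρmax))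
      have hB := min_le_right (ρmin * cv / (2 * θmax)) (θmin / (2 * ρmax))
      have e1 : ρmin * cv / (2 * θmax) * (θ - θStar)^2 =
          ρmin * cv * ((θ - θStar)^2 / (2 * θmax)) := by ring
      have e2 : θmin / (2 * ρmax) * (ρ - ρStar)^2 =
          θmin * ((ρ - ρStar)^2 / (2 * ρmax)) := by ring
      have m1 := mul_le_mul_of_nonneg_right hA (sq_nonneg (θ - θStar))
      have m2 := mul_le_mul_of_nonneg_right hB (sq_nonneg (ρ - ρStar))
      linarith
    · have u1 : ρ * cv * Dθ ≤ ρmax * cv * ((θ - θStar)^2 / (2 * θmin)) :=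
        mul_le_mul (mul_le_mul_of_nonneg_right hρm.2 hcv.le) hBθ.2 hDθ0 (by positivity)
      have u2 : θStar * Dρ ≤ θmax * ((ρ - ρStar)^2 / (2 * ρmin)) :=
        mul_le_mul hθSm.2 hBρ.2 hDρ0 hθmax.le
      have hA := le_max_left (ρmax * cv / (2 * θmin)) (θmax / (2 * ρmin))
      have hB := le_max_right (ρmax * cv / (2 * θmin)) (θmax / (2 * ρmin))
      have e1 : ρmax * cv / (2 * θmin) * (θ - θStar)^2 =
          ρmax * cv * ((θ - θStar)^2 / (2 * θmin)) := by ring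
      have e2 : θmax / (2 * ρmin) * (ρ - ρStar)^2 =
          θmax * ((ρ - ρStar)^2 / (2 * ρmin)) := by ring
      have m1 := mul_le_mul_of_nonneg_right hA (sq_nonneg (θ - θStar))
      have m2 := mul_le_mul_of_nonneg_right hB (sq_nonneg (ρ - ρStar))
      linarith
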